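/- arXiv:2411.02277 — 5 statements merged into one kernel-verified Lean document; each statement's English description precedes it below -/
import Mathlib

section
/- Monotonicity of the discrete L1 kernels: for every α ∈ (0,1), every N ≥ 2, every partition 0 = t_0 < t_1 < ⋯ < t_N = T, and all indices 2 ≤ j ≤ n ≤ N, one has 0 ≤ K^{n,j−1}_{1−α} < K^{n,j}_{1−α}. -/
open Finset

/-- The kernel `k_β(s) = s^(β-1)/Γ(β)`. -/
noncomputable def kker (β s : ℝ) : ℝ := s ^ (β - 1) / Real.Gamma β

/-- The discrete L1 kernels `K^{n,j}_{1-α}`. -/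
noncomputable def Kd (α : ℝ) (t : ℕ → ℝ) (n j : ℕ) : ℝ :=
  (kker (2 - α) (t n - t (j - 1)) - kker (2 - α) (t n - t j)) / (t j - t (j - 1))

/-- The complementary discrete kernels `P^{n,i}_α`, defined by downward recursion. -/
noncomputable def Pd (α : ℝ) (t : ℕ → ℝ) (n i : ℕ) : ℝ :=
  if i = n then 1 / Kd α t n n
  else (1 / Kd α t i i) *
    ∑ j ∈ (Finset.Ioc i n).attach,
      Pd α t n j.1 * (Kd α t j.1 (i + 1) - Kd α t j.1 i)
termination_by n - i
decreasing_by
  have h := Finset.mem_Ioc.mp j.2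
  omega

/-!
`K^{n,j}_{1-α}` is the secant slope of `k_{2-α}(s) = s^{1-α}/Γ(2-α)` over
`[t_n - t_j, t_n - t_{j-1}]`, and passing from `j` to `j - 1` moves this interval to the adjacent
one on its right. For `0 < α < 1` the function `k_{2-α}` is increasing and strictly concave on
`[0, ∞)`, so these slopes are nonnegative and strictly decrease from one interval to the next.
-/

lemma kker_secant_eq (β x y : ℝ) :
    (kker β y - kker β x) / (y - x) = (y ^ (β - 1) - x ^ (β - 1)) / (y - x) / Real.Gamma β := by
  simp only [kker]
  ring

lemma kker_secant_nonneg {β x y : ℝ} (hβ : 1 ≤ β) (hx : 0 ≤ x) (hxy : x ≤ y) :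
    0 ≤ (kker β y - kker β x) / (y - x) := by
  rw [kker_secant_eq]
  have hpow : x ^ (β - 1) ≤ y ^ (β - 1) := Real.rpow_le_rpow hx hxy (sub_nonneg.2 hβ)
  have hΓ : 0 < Real.Gamma β := Real.Gamma_pos_of_pos (by linarith)
  exact div_nonneg (div_nonneg (sub_nonneg.2 hpow) (sub_nonneg.2 hxy)) hΓ.le

lemma kker_secant_lt_secant {β x y z : ℝ} (hβ1 : 1 < β) (hβ2 : β < 2) (hx : 0 ≤ x)
    (hxy : x < y) (hyz : y < z) :
    (kker β z - kker β y) / (z - y) < (kker β y - kker β x) / (y - x) := by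
  simp only [kker_secant_eq]
  have hΓ : 0 < Real.Gamma β := Real.Gamma_pos_of_pos (by linarith)
  have hconcave : StrictConcaveOn ℝ (Set.Ici 0) fun s : ℝ => s ^ (β - 1) :=
    Real.strictConcaveOn_rpow (by linarith) (by linarith)
  exact div_lt_div_of_pos_right
    (hconcave.slope_anti_adjacent hx (by simp only [Set.mem_Ici]; linarith) hxy hyz) hΓ

lemma Kd_eq_kker_secant (α : ℝ) (t : ℕ → ℝ) (n j : ℕ) :
    Kd α t n j = (kker (2 - α) (t n - t (j - 1)) - kker (2 - α) (t n - t j)) /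
      ((t n - t (j - 1)) - (t n - t j)) := by
  rw [Kd, sub_sub_sub_cancel_left]

theorem discrete_L1_kernel_monotone_general
    (α : ℝ) (N : ℕ) (t : ℕ → ℝ)
    (hα0 : 0 < α) (hα1 : α < 1)
    (hmono : ∀ j, j < N → t j < t (j + 1)) :
    ∀ n j, 2 ≤ j → j ≤ n → n ≤ N →
      0 ≤ Kd α t n (j - 1) ∧ Kd α t n (j - 1) < Kd α t n j := by
  intro n j hj hjn hnN
  have ht : StrictMonoOn t (Set.Iic N) := strictMonoOn_Iic_of_lt_succ hmono
  have hx : 0 ≤ t n - t j :=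
    sub_nonneg.2 (ht.monotoneOn (Set.mem_Iic.2 (by omega)) (Set.mem_Iic.2 hnN) hjn)
  have hxy : t n - t j < t n - t (j - 1) :=
    sub_lt_sub_left (ht (Set.mem_Iic.2 (by omega)) (Set.mem_Iic.2 (by omega)) (by omega)) _
  have hyz : t n - t (j - 1) < t n - t (j - 2) :=
    sub_lt_sub_left (ht (Set.mem_Iic.2 (by omega)) (Set.mem_Iic.2 (by omega)) (by omega)) _
  rw [Kd_eq_kker_secant, Kd_eq_kker_secant, show j - 1 - 1 = j - 2 by omega]
  exact ⟨kker_secant_nonneg (by linarith) (hx.trans hxy.le) hyz.le,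
    kker_secant_lt_secant (by linarith) (by linarith) hx hxy hyz⟩

/-- Monotonicity of the discrete L1 kernels: for `2 ≤ j ≤ n ≤ N`,
`0 ≤ K^{n,j-1}_{1-α} < K^{n,j}_{1-α}`. -/
theorem discrete_L1_kernel_monotone
    (α T : ℝ) (N : ℕ) (t : ℕ → ℝ)
    (hα0 : 0 < α) (hα1 : α < 1) (hT : 0 < T) (hN : 2 ≤ N)
    (ht0 : t 0 = 0) (htN : t N = T)
    (hmono : ∀ j, j < N → t j < t (j + 1)) :
    ∀ n j, 2 ≤ j → j ≤ n → n ≤ N →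
      0 ≤ Kd α t n (j - 1) ∧ Kd α t n (j - 1) < Kd α t n j :=
  discrete_L1_kernel_monotone_general α N t hα0 hα1 hmono
end

section
/- Lemma 3.2(a): for every α ∈ (0,1), every partition 0 = t_0 < ⋯ < t_N = T, and all 1 ≤ j ≤ n ≤ N, the complementary discrete kernels satisfy 0 ≤ P^{n,j}_α ≤ Γ(2−α)·Δt_j^α. -/
open Finset

/-
The matrix `(P^{n,j})_j` is, by construction, a left inverse of the lower triangular matrix
`(K^{j,i})`: `∑_{j=i}^{n} P^{n,j} K^{j,i} = 1` for every `i ≤ n`. Concavity of `s ↦ s^{1-α}` makes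
`K^{j,i}` nondecreasing in `i`, so every term of the downward recursion for `P` is nonnegative.
Keeping only the diagonal term of the identity then gives `P^{n,i} K^{i,i} ≤ 1`, and
`1 / K^{i,i} = Γ(2-α) Δt_i^α` because `K^{i,i}` is the slope of `s^{1-α}` on `[0, Δt_i]`.
-/

section ComplementaryKernels

variable {α : ℝ} {t : ℕ → ℝ} {n : ℕ}

lemma Pd_self : Pd α t n n = 1 / Kd α t n n := by
  rw [Pd, if_pos rfl]

lemma Pd_of_lt {i : ℕ} (h : i < n) :
    Pd α t n i = 1 / Kd α t i i *
      ∑ j ∈ Ioc i n, Pd α t n j * (Kd α t j (i + 1) - Kd α t j i) := by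
  rw [Pd, if_neg h.ne, sum_attach (Ioc i n) fun j => Pd α t n j * (Kd α t j (i + 1) - Kd α t j i)]

theorem sum_Pd_mul_Kd {i : ℕ} (hdiag : ∀ k, i ≤ k → k ≤ n → Kd α t k k ≠ 0) (hin : i ≤ n) :
    ∑ j ∈ Icc i n, Pd α t n j * Kd α t j i = 1 := by
  rcases hin.eq_or_lt with rfl | hlt
  · rw [Icc_self, sum_singleton, Pd_self, one_div_mul_cancel (hdiag i le_rfl le_rfl)]
  have hrec : ∑ j ∈ Icc (i + 1) n, Pd α t n j * Kd α t j (i + 1) = 1 :=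
    sum_Pd_mul_Kd (fun k hik hkn => hdiag k (by omega) hkn) hlt
  have hPK : Pd α t n i * Kd α t i i =
      ∑ j ∈ Ioc i n, Pd α t n j * (Kd α t j (i + 1) - Kd α t j i) := by
    rw [Pd_of_lt hlt, mul_comm, ← mul_assoc, mul_one_div_cancel (hdiag i le_rfl hin)]
    exact one_mul _
  rw [Icc_eq_cons_Ioc hin, sum_cons, hPK, ← sum_add_distrib, ← hrec,
    ← Icc_add_one_left_eq_Ioc]
  exact sum_congr rfl fun j _ => by ring
termination_by n - i

theorem Pd_nonneg {i : ℕ} (hdiag : ∀ k, i ≤ k → k ≤ n → 0 < Kd α t k k)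
    (hmono : ∀ k j, i ≤ k → k < j → j ≤ n → Kd α t j k ≤ Kd α t j (k + 1)) (hin : i ≤ n) :
    0 ≤ Pd α t n i := by
  have hKii := hdiag i le_rfl hin
  rcases hin.eq_or_lt with rfl | hlt
  · rw [Pd_self]
    positivity
  rw [Pd_of_lt hlt]
  refine mul_nonneg (by positivity) (sum_nonneg fun j hj => ?_)
  obtain ⟨hij, hjn⟩ := mem_Ioc.mp hj
  exact mul_nonneg
    (Pd_nonneg (fun k hjk hkn => hdiag k (by omega) hkn)
      (fun k l hjk hkl hln => hmono k l (by omega) hkl hln) hjn)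
    (sub_nonneg.mpr (hmono i j le_rfl hij hjn))
termination_by n - i

theorem Pd_le_one_div_Kd_self {i : ℕ} (hin : i ≤ n) (hKii : 0 < Kd α t i i)
    (hK : ∀ j ∈ Icc i n, 0 ≤ Kd α t j i) (hP : ∀ j ∈ Icc i n, 0 ≤ Pd α t n j)
    (hsum : ∑ j ∈ Icc i n, Pd α t n j * Kd α t j i = 1) :
    Pd α t n i ≤ 1 / Kd α t i i := by
  rw [le_div_iff₀ hKii, ← hsum]
  exact single_le_sum (f := fun j => Pd α t n j * Kd α t j i)
    (fun j hj => mul_nonneg (hP j hj) (hK j hj)) (mem_Icc.mpr ⟨le_rfl, hin⟩)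

end ComplementaryKernels

section StrictMonoOnIic

variable {β γ : Type*} [PartialOrder β] [Preorder γ] {f : β → γ} {N : β}

lemma StrictMonoOn.apply_lt_of_le_bound (hf : StrictMonoOn f (Set.Iic N)) {i j : β}
    (hij : i < j) (hjN : j ≤ N) : f i < f j :=
  hf (Set.mem_Iic.mpr (hij.le.trans hjN)) (Set.mem_Iic.mpr hjN) hij

lemma StrictMonoOn.apply_le_of_le_bound (hf : StrictMonoOn f (Set.Iic N)) {i j : β}
    (hij : i ≤ j) (hjN : j ≤ N) : f i ≤ f j :=
  hf.monotoneOn (Set.mem_Iic.mpr (hij.trans hjN)) (Set.mem_Iic.mpr hjN) hij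

end StrictMonoOnIic

section L1Kernels

lemma Kd_eq_slope_div_Gamma (α : ℝ) (t : ℕ → ℝ) (n j : ℕ) :
    Kd α t n j = ((t n - t (j - 1)) ^ (1 - α) - (t n - t j) ^ (1 - α)) /
      ((t n - t (j - 1)) - (t n - t j)) / Real.Gamma (2 - α) := by
  rw [Kd, kker, kker, show (2 : ℝ) - α - 1 = 1 - α by ring, sub_sub_sub_cancel_left]
  ring

variable {α : ℝ} {N : ℕ} {t : ℕ → ℝ}

lemma Kd_pos (hα1 : α < 1) (ht : StrictMonoOn t (Set.Iic N)) {n j : ℕ}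
    (hj : 1 ≤ j) (hjn : j ≤ n) (hnN : n ≤ N) : 0 < Kd α t n j := by
  have hΓ : 0 < Real.Gamma (2 - α) := Real.Gamma_pos_of_pos (by linarith)
  have hstep : t (j - 1) < t j := ht.apply_lt_of_le_bound (by omega) (by omega)
  have htj : t j ≤ t n := ht.apply_le_of_le_bound hjn (by omega)
  have hpow : (t n - t j) ^ (1 - α) < (t n - t (j - 1)) ^ (1 - α) :=
    Real.rpow_lt_rpow (by linarith) (by linarith) (by linarith)
  rw [Kd_eq_slope_div_Gamma]
  exact div_pos (div_pos (by linarith) (by linarith)) hΓ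

lemma one_div_Kd_self (hα1 : α < 1) {i : ℕ} (hΔ : t (i - 1) < t i) :
    1 / Kd α t i i = Real.Gamma (2 - α) * (t i - t (i - 1)) ^ α := by
  have hΓ : 0 < Real.Gamma (2 - α) := Real.Gamma_pos_of_pos (by linarith)
  have hΔ' : 0 < t i - t (i - 1) := sub_pos.mpr hΔ
  have hsplit : (t i - t (i - 1)) ^ α * (t i - t (i - 1)) ^ (1 - α) = t i - t (i - 1) := by
    rw [← Real.rpow_add hΔ', add_sub_cancel, Real.rpow_one]
  have hpow : (t i - t (i - 1)) ^ (1 - α) ≠ 0 := (Real.rpow_pos_of_pos hΔ' _).ne'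
  rw [Kd_eq_slope_div_Gamma, sub_self, Real.zero_rpow (by linarith), sub_zero, sub_zero]
  field_simp
  linear_combination -hsplit

lemma Kd_le_Kd_succ (hα0 : 0 ≤ α) (hα1 : α < 1) (ht : StrictMonoOn t (Set.Iic N))
    {i j : ℕ} (hi : 1 ≤ i) (hij : i < j) (hjN : j ≤ N) :
    Kd α t j i ≤ Kd α t j (i + 1) := by
  have hΓ : 0 < Real.Gamma (2 - α) := Real.Gamma_pos_of_pos (by linarith)
  have h₁ : t (i - 1) < t i := ht.apply_lt_of_le_bound (by omega) (by omega)
  have h₂ : t i < t (i + 1) := ht.apply_lt_of_le_bound (by omega) (by omega)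
  have h₃ : t (i + 1) ≤ t j := ht.apply_le_of_le_bound hij hjN
  have hconc := (Real.concaveOn_rpow (p := 1 - α) (by linarith) (by linarith)).slope_anti_adjacent
    (x := t j - t (i + 1)) (y := t j - t i) (z := t j - t (i - 1))
    (Set.mem_Ici.mpr (by linarith)) (Set.mem_Ici.mpr (by linarith))
    (by linarith) (by linarith)
  rw [Kd_eq_slope_div_Gamma, Kd_eq_slope_div_Gamma, Nat.add_sub_cancel]
  gcongr

end L1Kernels

theorem complementary_kernel_bounds_general
    (α : ℝ) (N : ℕ) (t : ℕ → ℝ)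
    (hα0 : 0 < α) (hα1 : α < 1)
    (hmono : ∀ j, j < N → t j < t (j + 1)) :
    ∀ n j, 1 ≤ j → j ≤ n → n ≤ N →
      0 ≤ Pd α t n j ∧ Pd α t n j ≤ Real.Gamma (2 - α) * (t j - t (j - 1)) ^ α := by
  intro n j hj hjn hnN
  have ht : StrictMonoOn t (Set.Iic N) := strictMonoOn_Iic_of_lt_succ hmono
  have hK : ∀ k l, j ≤ k → k ≤ l → l ≤ n → 0 < Kd α t l k :=
    fun k l hjk hkl hln => Kd_pos hα1 ht (by omega) hkl (by omega)
  have hP : ∀ k ∈ Icc j n, 0 ≤ Pd α t n k := by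
    intro k hk
    obtain ⟨hjk, hkn⟩ := mem_Icc.mp hk
    exact Pd_nonneg (fun l hkl hln => hK l l (by omega) le_rfl hln)
      (fun l m hkl hlm hmn => Kd_le_Kd_succ hα0.le hα1 ht (by omega) hlm (by omega)) hkn
  have hsum := sum_Pd_mul_Kd (fun k hjk hkn => (hK k k hjk le_rfl hkn).ne') hjn
  refine ⟨hP j (mem_Icc.mpr ⟨le_rfl, hjn⟩), ?_⟩
  rw [← one_div_Kd_self hα1 (ht.apply_lt_of_le_bound (by omega) (by omega))]
  exact Pd_le_one_div_Kd_self hjn (hK j j le_rfl le_rfl hjn)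
    (fun l hl => (hK j l le_rfl (mem_Icc.mp hl).1 (mem_Icc.mp hl).2).le) hP hsum

/-- Lemma 3.2(a): `0 ≤ P^{n,j}_α ≤ Γ(2-α) · Δt_j^α` for all `1 ≤ j ≤ n ≤ N`. -/
theorem complementary_kernel_bounds
    (α T : ℝ) (N : ℕ) (t : ℕ → ℝ)
    (hα0 : 0 < α) (hα1 : α < 1) (hT : 0 < T)
    (ht0 : t 0 = 0) (htN : t N = T)
    (hmono : ∀ j, j < N → t j < t (j + 1)) :
    ∀ n j, 1 ≤ j → j ≤ n → n ≤ N →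
      0 ≤ Pd α t n j ∧ Pd α t n j ≤ Real.Gamma (2 - α) * (t j - t (j - 1)) ^ α :=
  complementary_kernel_bounds_general α N t hα0 hα1 hmono
end

section
/- Lemma 3.1, first estimate: let α ∈ (0,1), let 0 = t_0 < ⋯ < t_N = T be a partition, and let φ^0, …, φ^N be elements of the real Hilbert space L²(Ω) (Ω a measurable subset of ℝ^d). Then for every 1 ≤ n ≤ N, (1/2) Σ_{j=1}^{n} K^{n,j}_{1−α}(‖φ^j‖² − ‖φ^{j−1}‖²) ≤ ⟨ Σ_{j=1}^{n} K^{n,j}_{1−α}(φ^j − φ^{j−1}), φ^n ⟩, i.e. (1/2) D^α_{t_n} ‖φ^n‖² ≤ (D^α_{t_n} φ^n, φ^n). -/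
/-!
Since `⟪x - y, z⟫ - (‖x‖² - ‖y‖²) / 2 = (‖y - z‖² - ‖x - z‖²) / 2`, with `e i = ‖φ i - φ n‖² / 2`
the right-hand side minus the left-hand side is `∑ K j * (e (j - 1) - e j)`. As `e ≥ 0` and
`e n = 0`, summation by parts makes this nonnegative whenever `j ↦ K j` is nonnegative and
nondecreasing. The L1 kernel `K^{n,j}` is the slope of `k_{2-α}` over
`[t n - t j, t n - t (j - 1)]`; these intervals move left as `j` grows, and `k_{2-α}` is
nondecreasing and concave because `0 ≤ 1 - α ≤ 1`.
-/

open Finset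

open MeasureTheory

theorem neg_mul_le_sum_Icc_mul_sub {K e : ℕ → ℝ} {n : ℕ} (hn : 1 ≤ n) (hK : 0 ≤ K 1)
    (hKm : MonotoneOn K (Set.Icc 1 n)) (he : ∀ i < n, 0 ≤ e i) :
    -(K n * e n) ≤ ∑ j ∈ Icc 1 n, K j * (e (j - 1) - e j) := by
  induction n, hn using Nat.le_induction with
  | base => simp only [Icc_self, sum_singleton]; nlinarith [he 0 one_pos]
  | succ n hn ih =>
    have hstep : K n ≤ K (n + 1) :=
      hKm ⟨hn, by omega⟩ ⟨by omega, le_rfl⟩ (Nat.le_succ n)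
    have ih := ih (hKm.mono (Set.Icc_subset_Icc_right (Nat.le_succ n))) fun i hi =>
      he i (by omega)
    rw [sum_Icc_succ_top (by omega), Nat.add_sub_cancel]
    nlinarith [he n (Nat.lt_succ_self n)]

theorem inner_sub_left_eq_half_sq_norm_sub {E : Type*} [NormedAddCommGroup E]
    [InnerProductSpace ℝ E] (x y z : E) :
    inner ℝ (x - y) z
      = (‖x‖ ^ 2 - ‖y‖ ^ 2) / 2 + (‖y - z‖ ^ 2 - ‖x - z‖ ^ 2) / 2 := by
  rw [norm_sub_sq_real, norm_sub_sq_real, inner_sub_left]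
  ring

theorem half_sum_mul_sub_sq_norm_le_inner {E : Type*} [NormedAddCommGroup E]
    [InnerProductSpace ℝ E] {K : ℕ → ℝ} {n : ℕ} (hn : 1 ≤ n) (hK : 0 ≤ K 1)
    (hKm : MonotoneOn K (Set.Icc 1 n)) (φ : ℕ → E) :
    (1 / 2) * ∑ j ∈ Icc 1 n, K j * (‖φ j‖ ^ 2 - ‖φ (j - 1)‖ ^ 2)
      ≤ inner ℝ (∑ j ∈ Icc 1 n, K j • (φ j - φ (j - 1))) (φ n) := by
  set e : ℕ → ℝ := fun i => ‖φ i - φ n‖ ^ 2 / 2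
  have habel := neg_mul_le_sum_Icc_mul_sub (e := e) hn hK hKm fun i _ => by positivity
  have hen : e n = 0 := by simp [e]
  have hdiff : inner ℝ (∑ j ∈ Icc 1 n, K j • (φ j - φ (j - 1))) (φ n)
      - (1 / 2) * ∑ j ∈ Icc 1 n, K j * (‖φ j‖ ^ 2 - ‖φ (j - 1)‖ ^ 2)
      = ∑ j ∈ Icc 1 n, K j * (e (j - 1) - e j) := by
    rw [sum_inner, mul_sum, ← sum_sub_distrib]
    refine sum_congr rfl fun j _ => ?_
    rw [real_inner_smul_left, inner_sub_left_eq_half_sq_norm_sub]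
    ring
  rw [hen, mul_zero, neg_zero] at habel
  linarith

theorem concaveOn_kker {β : ℝ} (hβ1 : 1 ≤ β) (hβ2 : β ≤ 2) :
    ConcaveOn ℝ (Set.Ici 0) (kker β) := by
  have h := (Real.concaveOn_rpow (p := β - 1) (by linarith) (by linarith)).smul
    (c := (Real.Gamma β)⁻¹) (inv_nonneg.2 (Real.Gamma_pos_of_pos (by linarith)).le)
  have hk : kker β = fun s => (Real.Gamma β)⁻¹ • s ^ (β - 1) := by
    funext s
    rw [kker, smul_eq_mul, div_eq_inv_mul]
  rwa [hk]

theorem monotoneOn_kker {β : ℝ} (hβ : 1 ≤ β) : MonotoneOn (kker β) (Set.Ici 0) :=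
  fun x hx y _ hxy =>
    div_le_div_of_nonneg_right (Real.rpow_le_rpow hx hxy (by linarith))
      (Real.Gamma_pos_of_pos (by linarith)).le

theorem Kd_eq_div {α : ℝ} {t : ℕ → ℝ} {n j : ℕ} :
    Kd α t n j = (kker (2 - α) (t n - t (j - 1)) - kker (2 - α) (t n - t j))
      / ((t n - t (j - 1)) - (t n - t j)) := by
  rw [Kd, sub_sub_sub_cancel_left]

theorem Kd_nonneg {α : ℝ} {t : ℕ → ℝ} {n j : ℕ} (hα : α ≤ 1)
    (ht : StrictMonoOn t (Set.Iic n)) (hj : j ∈ Set.Icc 1 n) : 0 ≤ Kd α t n j := by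
  obtain ⟨hj1, hjn⟩ := hj
  have hlt : t (j - 1) < t j := ht (by simp; omega) (by simpa using hjn) (by omega)
  have hle : t j ≤ t n := ht.monotoneOn (by simpa using hjn) (by simp) hjn
  refine div_nonneg (sub_nonneg.2 <| monotoneOn_kker (by linarith) ?_ ?_ ?_) (by linarith)
  · exact Set.mem_Ici.2 (by linarith)
  · exact Set.mem_Ici.2 (by linarith)
  · linarith

theorem Kd_monotoneOn {α : ℝ} {t : ℕ → ℝ} {n : ℕ} (hα0 : 0 ≤ α) (hα1 : α ≤ 1)
    (ht : StrictMonoOn t (Set.Iic n)) : MonotoneOn (Kd α t n) (Set.Icc 1 n) := by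
  refine monotoneOn_of_le_succ Set.ordConnected_Icc fun j _ hj hj' => ?_
  simp only [Order.succ_eq_add_one, Set.mem_Icc] at hj hj' ⊢
  have h0 : t (j - 1) < t j := ht (by simp; omega) (by simp; omega) (by omega)
  have h1 : t j < t (j + 1) := ht (by simp; omega) (by simpa using hj'.2) (by omega)
  have h2 : t (j + 1) ≤ t n := ht.monotoneOn (by simpa using hj'.2) (by simp) hj'.2
  rw [Kd_eq_div, Kd_eq_div, Nat.add_sub_cancel]
  exact (concaveOn_kker (by linarith) (by linarith)).slope_anti_adjacent
    (by simp only [Set.mem_Ici]; linarith) (by simp only [Set.mem_Ici]; linarith)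
    (by linarith) (by linarith)

theorem discrete_caputo_half_square_estimate_general
    (d : ℕ) (Ω : Set (Fin d → ℝ))
    (α : ℝ) (N : ℕ) (t : ℕ → ℝ)
    (hα0 : 0 < α) (hα1 : α < 1)
    (hmono : ∀ j, j < N → t j < t (j + 1))
    (φ : ℕ → Lp ℝ 2 (volume.restrict Ω)) :
    ∀ n, 1 ≤ n → n ≤ N →
      (1 / 2) * ∑ j ∈ Finset.Icc 1 n, Kd α t n j * (‖φ j‖ ^ 2 - ‖φ (j - 1)‖ ^ 2)
        ≤ (inner ℝ (∑ j ∈ Finset.Icc 1 n, Kd α t n j • (φ j - φ (j - 1))) (φ n) : ℝ) := by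
  intro n hn hnN
  have ht : StrictMonoOn t (Set.Iic n) :=
    strictMonoOn_Iic_of_lt_succ fun m hm => hmono m (by omega)
  exact half_sum_mul_sub_sq_norm_le_inner hn (Kd_nonneg hα1.le ht ⟨le_rfl, hn⟩)
    (Kd_monotoneOn hα0.le hα1.le ht) φ

/-- Lemma 3.1, first estimate: for `φ^0, …, φ^N ∈ L²(Ω)` and `1 ≤ n ≤ N`,
`(1/2) D^α_{t_n} ‖φ^n‖² ≤ (D^α_{t_n} φ^n, φ^n)`. -/
theorem discrete_caputo_half_square_estimate
    (d : ℕ) (Ω : Set (Fin d → ℝ)) (hΩ : MeasurableSet Ω)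
    (α T : ℝ) (N : ℕ) (t : ℕ → ℝ)
    (hα0 : 0 < α) (hα1 : α < 1) (hT : 0 < T)
    (ht0 : t 0 = 0) (htN : t N = T)
    (hmono : ∀ j, j < N → t j < t (j + 1))
    (φ : ℕ → Lp ℝ 2 (volume.restrict Ω)) :
    ∀ n, 1 ≤ n → n ≤ N →
      (1 / 2) * ∑ j ∈ Finset.Icc 1 n, Kd α t n j * (‖φ j‖ ^ 2 - ‖φ (j - 1)‖ ^ 2)
        ≤ (inner ℝ (∑ j ∈ Finset.Icc 1 n, Kd α t n j • (φ j - φ (j - 1))) (φ n) : ℝ) :=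
  discrete_caputo_half_square_estimate_general d Ω α N t hα0 hα1 hmono φ
end

section
/- Second-order extrapolation error on a graded mesh (equations (5.16)–(5.20) in the proof of Lemma 5.3): let α ∈ (0,1), γ ≥ 1, T > 0, N ≥ 3, let t_n = (n/N)^γ T be the graded mesh with Δt_n = t_n − t_{n−1} and μ_n = Δt_n/Δt_{n−1}, let X be a real Banach space, and let u : (0,T] → X be twice continuously differentiable with ‖u''(t)‖ ≤ M t^{α−2} for all t ∈ (0,T] and some M > 0. Then for every 3 ≤ n ≤ N, ‖u(t_n) − (1+μ_n)u(t_{n−1}) + μ_n u(t_{n−2})‖ ≤ 5M·3^{2γ}·Δt_n²·t_n^{α−2} ≤ 5M·3^{2γ}·γ²·T^α · N^{−min(γα, 2)}. -/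
open Set

lemma taylor_aux {X : Type*} [NormedAddCommGroup X] [NormedSpace ℝ X]
    (u u' u'' : ℝ → X) (T a b C : ℝ)
    (ha : 0 < a) (hab : a ≤ b) (hbT : b ≤ T)
    (hu' : ∀ s ∈ Set.Ioc (0 : ℝ) T, HasDerivAt u (u' s) s)
    (hu'' : ∀ s ∈ Set.Ioc (0 : ℝ) T, HasDerivAt u' (u'' s) s)
    (hC : 0 ≤ C)
    (hbd : ∀ s ∈ Set.Icc a b, ‖u'' s‖ ≤ C)
    {x y : ℝ} (hx : x ∈ Set.Icc a b) (hy : y ∈ Set.Icc a b) :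
    ‖u y - u x - (y - x) • u' x‖ ≤ C * (b - a) ^ 2 := by
  have hsub : Set.Icc a b ⊆ Set.Ioc (0 : ℝ) T :=
    fun s hs => ⟨lt_of_lt_of_le ha hs.1, le_trans hs.2 hbT⟩
  have hconv : Convex ℝ (Set.Icc a b) := convex_Icc a b
  have hu''W : ∀ s ∈ Set.Icc a b, HasDerivWithinAt u' (u'' s) (Set.Icc a b) s :=
    fun s hs => (hu'' s (hsub hs)).hasDerivWithinAt
  have lip : ∀ s ∈ Set.Icc a b, ‖u' s - u' x‖ ≤ C * (b - a) := by
    intro s hs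
    have h1 := hconv.norm_image_sub_le_of_norm_hasDerivWithin_le hu''W hbd hx hs
    have h2 : ‖s - x‖ ≤ b - a := by
      rw [Real.norm_eq_abs, abs_sub_le_iff]
      constructor <;> [linarith [hs.2, hx.1]; linarith [hs.1, hx.2]]
    exact h1.trans (mul_le_mul_of_nonneg_left h2 hC)
  set g : ℝ → X := fun s => u s - s • u' x with hg
  have hgW : ∀ s ∈ Set.Icc a b, HasDerivWithinAt g (u' s - u' x) (Set.Icc a b) s := by
    intro s hs
    exact ((hu' s (hsub hs)).sub (((hasDerivAt_id s).smul_const (u' x)).congr_deriv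
      (one_smul ℝ (u' x)))).hasDerivWithinAt
  have hmain := hconv.norm_image_sub_le_of_norm_hasDerivWithin_le hgW lip hx hy
  have habs : ‖y - x‖ ≤ b - a := by
    rw [Real.norm_eq_abs, abs_sub_le_iff]
    constructor <;> [linarith [hy.2, hx.1]; linarith [hy.1, hx.2]]
  have hgdiff : g y - g x = u y - u x - (y - x) • u' x := by
    simp only [hg, sub_smul]; abel
  rw [hgdiff] at hmain
  calc ‖u y - u x - (y - x) • u' x‖ ≤ C * (b - a) * ‖y - x‖ := hmain
    _ ≤ C * (b - a) * (b - a) := by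
        exact mul_le_mul_of_nonneg_left habs (mul_nonneg hC (by linarith))
    _ = C * (b - a) ^ 2 := by ring

lemma mesh_convex (γ : ℝ) (hγ : 1 ≤ γ) (x : ℝ) (hx : 2 ≤ x) :
    2 * (x - 1) ^ γ ≤ x ^ γ + (x - 2) ^ γ := by
  have h := (convexOn_rpow hγ).2 (mem_Ici.2 (by linarith : (0:ℝ) ≤ x - 2))
    (mem_Ici.2 (by linarith : (0:ℝ) ≤ x))
    (by norm_num : (0:ℝ) ≤ 1/2) (by norm_num : (0:ℝ) ≤ 1/2) (by norm_num)
  simp only [smul_eq_mul] at h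
  have hpt : 1/2 * (x - 2) + 1/2 * x = x - 1 := by ring
  rw [hpt] at h
  linarith

lemma rpow_diff_le (γ : ℝ) (hγ : 1 ≤ γ) (x : ℝ) (hx : 1 ≤ x) :
    x ^ γ - (x - 1) ^ γ ≤ γ * x ^ (γ - 1) := by
  have hlt : x - 1 < x := by linarith
  have hcont : ContinuousOn (fun s : ℝ => s ^ γ) (Icc (x-1) x) := by
    intro s hs
    exact (Real.continuousAt_rpow_const s γ (Or.inr (by linarith))).continuousWithinAt
  have hderiv : ∀ s ∈ Ioo (x-1) x, HasDerivAt (fun s : ℝ => s ^ γ) (γ * s ^ (γ - 1)) s :=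
    fun s hs => Real.hasDerivAt_rpow_const (Or.inr hγ)
  obtain ⟨c, hc, hceq⟩ := exists_hasDerivAt_eq_slope (fun s : ℝ => s ^ γ)
    (fun s => γ * s ^ (γ - 1)) hlt hcont hderiv
  have hxx : x - (x - 1) = 1 := by ring
  rw [hxx, div_one] at hceq
  rw [← hceq]
  have hc0 : 0 ≤ c := by have := hc.1; linarith
  have : c ^ (γ - 1) ≤ x ^ (γ - 1) :=
    Real.rpow_le_rpow hc0 hc.2.le (by linarith)
  nlinarith [this, (by linarith : (0:ℝ) < γ)]

lemma rpow_alg (γ α T m Nr : ℝ) (hγ : 0 < γ) (hm : 0 < m) (hN : 0 < Nr) (hT : 0 < T) :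
    (γ * m ^ (γ - 1) * (T / Nr ^ γ)) ^ 2 * ((m ^ γ) * (T / Nr ^ γ)) ^ (α - 2)
      = γ ^ 2 * T ^ α * (m ^ (γ * α - 2) * Nr ^ (-(γ * α))) := by
  have hNγ : (0:ℝ) < Nr ^ γ := Real.rpow_pos_of_pos hN γ
  have hD : (0:ℝ) < T / Nr ^ γ := div_pos hT hNγ
  have hL : (0:ℝ) < (γ * m ^ (γ - 1) * (T / Nr ^ γ)) ^ 2 * ((m ^ γ) * (T / Nr ^ γ)) ^ (α - 2) := by
    positivity
  have hR : (0:ℝ) < γ ^ 2 * T ^ α * (m ^ (γ * α - 2) * Nr ^ (-(γ * α))) := by positivity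
  refine Real.log_injOn_pos.eq_iff (Set.mem_Ioi.2 hL) (Set.mem_Ioi.2 hR) |>.mp ?_
  simp (disch := positivity) only [Real.log_mul, Real.log_div, Real.log_pow, Real.log_rpow hm,
    Real.log_rpow hN, Real.log_rpow hT,
    Real.log_rpow (show (0:ℝ) < m ^ γ * (T / Nr ^ γ) from by positivity),
    Real.log_rpow (show (0:ℝ) < γ * m ^ (γ - 1) * (T / Nr ^ γ) from by positivity)]
  push_cast
  ring


set_option maxHeartbeats 1000000 in
/-- Second-order extrapolation error on a graded mesh (equations (5.16)–(5.20)):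
on the graded mesh `t_n = (n/N)^γ T`, for `u : (0,T] → X` twice continuously
differentiable with `‖u''(t)‖ ≤ M t^{α-2}`, for every `3 ≤ n ≤ N`,
`‖u(t_n) - (1+μ_n)u(t_{n-1}) + μ_n u(t_{n-2})‖ ≤ 5M·3^{2γ}·Δt_n²·t_n^{α-2}
  ≤ 5M·3^{2γ}·γ²·T^α·N^{-min(γα,2)}`. -/
theorem extrapolation_error_graded_mesh
    (α γ T M : ℝ) (N : ℕ) (t : ℕ → ℝ)
    {X : Type*} [NormedAddCommGroup X] [NormedSpace ℝ X]
    (u u' u'' : ℝ → X)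
    (hα0 : 0 < α) (hα1 : α < 1) (hγ : 1 ≤ γ) (hT : 0 < T) (hN : 3 ≤ N) (hM : 0 < M)
    (ht : ∀ n, t n = ((n : ℝ) / (N : ℝ)) ^ γ * T)
    (hu' : ∀ s ∈ Set.Ioc (0 : ℝ) T, HasDerivAt u (u' s) s)
    (hu'' : ∀ s ∈ Set.Ioc (0 : ℝ) T, HasDerivAt u' (u'' s) s)
    (hcont : ContinuousOn u'' (Set.Ioc (0 : ℝ) T))
    (hbound : ∀ s ∈ Set.Ioc (0 : ℝ) T, ‖u'' s‖ ≤ M * s ^ (α - 2)) :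
    ∀ n, 3 ≤ n → n ≤ N →
      ‖u (t n) - (1 + (t n - t (n - 1)) / (t (n - 1) - t (n - 2))) • u (t (n - 1))
          + ((t n - t (n - 1)) / (t (n - 1) - t (n - 2))) • u (t (n - 2))‖
        ≤ 5 * M * (3 : ℝ) ^ (2 * γ) * (t n - t (n - 1)) ^ 2 * t n ^ (α - 2)
      ∧ 5 * M * (3 : ℝ) ^ (2 * γ) * (t n - t (n - 1)) ^ 2 * t n ^ (α - 2)
        ≤ 5 * M * (3 : ℝ) ^ (2 * γ) * γ ^ 2 * T ^ α * (N : ℝ) ^ (-(min (γ * α) 2)) := by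
  intro n hn3 hnN
  have hN0 : (0:ℝ) < N := by
    have : 0 < N := by omega
    exact_mod_cast this
  have hm3 : (3:ℝ) ≤ (n:ℝ) := by exact_mod_cast hn3
  have hmN : ((n:ℝ)) ≤ (N:ℝ) := by exact_mod_cast hnN
  have hγ0 : (0:ℝ) < γ := lt_of_lt_of_le one_pos hγ
  have hα2 : α - 2 ≤ 0 := by linarith
  have e1 : ((n-1:ℕ):ℝ) = (n:ℝ) - 1 := by rw [Nat.cast_sub (by omega : 1 ≤ n)]; norm_num
  have e2 : ((n-2:ℕ):ℝ) = (n:ℝ) - 2 := by rw [Nat.cast_sub (by omega : 2 ≤ n)]; norm_num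
  set D := T / (N:ℝ) ^ γ with hDdef
  have hD : 0 < D := div_pos hT (Real.rpow_pos_of_pos hN0 γ)
  have hta : t (n-2) = ((n:ℝ)-2) ^ γ * D := by
    rw [ht, e2, Real.div_rpow (by linarith) hN0.le, hDdef]; ring
  have htb : t (n-1) = ((n:ℝ)-1) ^ γ * D := by
    rw [ht, e1, Real.div_rpow (by linarith) hN0.le, hDdef]; ring
  have htc : t n = ((n:ℝ)) ^ γ * D := by
    rw [ht, Real.div_rpow (by linarith) hN0.le, hDdef]; ring
  have hr2 : (0:ℝ) < ((n:ℝ)-2) ^ γ := Real.rpow_pos_of_pos (by linarith) _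
  have hmono21 : ((n:ℝ)-2) ^ γ < ((n:ℝ)-1) ^ γ :=
    Real.rpow_lt_rpow (by linarith) (by linarith) hγ0
  have hmono10 : ((n:ℝ)-1) ^ γ < ((n:ℝ)) ^ γ :=
    Real.rpow_lt_rpow (by linarith) (by linarith) hγ0
  have hta_pos : 0 < t (n-2) := by rw [hta]; exact mul_pos hr2 hD
  have hab : t (n-2) < t (n-1) := by
    rw [hta, htb]; exact mul_lt_mul_of_pos_right hmono21 hD
  have hbc : t (n-1) < t n := by
    rw [htb, htc]; exact mul_lt_mul_of_pos_right hmono10 hD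
  have htb_pos : 0 < t (n-1) := hta_pos.trans hab
  have htc_pos : 0 < t n := htb_pos.trans hbc
  have hcT : t n ≤ T := by
    rw [htc]
    have h1 : ((n:ℝ)) ^ γ ≤ ((N:ℝ)) ^ γ := Real.rpow_le_rpow (by linarith) hmN hγ0.le
    calc ((n:ℝ)) ^ γ * D ≤ ((N:ℝ)) ^ γ * D := mul_le_mul_of_nonneg_right h1 hD.le
      _ = T := by rw [hDdef]; field_simp
  have htbT : t (n-1) ≤ T := hbc.le.trans hcT
  have hΔ1 : 0 < t (n-1) - t (n-2) := sub_pos.2 hab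
  have hΔ : 0 < t n - t (n-1) := sub_pos.2 hbc
  have hstep : t (n-1) - t (n-2) ≤ t n - t (n-1) := by
    have hc := mesh_convex γ hγ (n:ℝ) (by linarith)
    rw [hta, htb, htc]
    linarith [mul_le_mul_of_nonneg_right hc hD.le]
  -- Taylor bounds
  have hbd2 : ∀ s ∈ Set.Icc (t (n-2)) (t (n-1)), ‖u'' s‖ ≤ M * (t (n-2)) ^ (α-2) := by
    intro s hs
    have hs0 : 0 < s := lt_of_lt_of_le hta_pos hs.1
    refine (hbound s ⟨hs0, hs.2.trans htbT⟩).trans ?_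
    exact mul_le_mul_of_nonneg_left (Real.rpow_le_rpow_of_nonpos hta_pos hs.1 hα2) hM.le
  have hbd1 : ∀ s ∈ Set.Icc (t (n-1)) (t n), ‖u'' s‖ ≤ M * (t (n-1)) ^ (α-2) := by
    intro s hs
    have hs0 : 0 < s := lt_of_lt_of_le htb_pos hs.1
    refine (hbound s ⟨hs0, hs.2.trans hcT⟩).trans ?_
    exact mul_le_mul_of_nonneg_left (Real.rpow_le_rpow_of_nonpos htb_pos hs.1 hα2) hM.le
  have hR2 := taylor_aux u u' u'' T (t (n-2)) (t (n-1)) (M * (t (n-2)) ^ (α-2))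
    hta_pos hab.le htbT hu' hu''
    (mul_nonneg hM.le (Real.rpow_nonneg hta_pos.le _)) hbd2
    (x := t (n-1)) (y := t (n-2)) ⟨hab.le, le_refl _⟩ ⟨le_refl _, hab.le⟩
  have hR1 := taylor_aux u u' u'' T (t (n-1)) (t n) (M * (t (n-1)) ^ (α-2))
    htb_pos hbc.le hcT hu' hu''
    (mul_nonneg hM.le (Real.rpow_nonneg htb_pos.le _)) hbd1
    (x := t (n-1)) (y := t n) ⟨le_refl _, hbc.le⟩ ⟨hbc.le, le_refl _⟩
  -- decomposition
  set μ := (t n - t (n - 1)) / (t (n - 1) - t (n - 2)) with hμdef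
  have hμpos : 0 < μ := div_pos hΔ hΔ1
  have hμmul : μ * (t (n-1) - t (n-2)) = t n - t (n-1) := div_mul_cancel₀ _ hΔ1.ne'
  have hdecomp : u (t n) - (1 + μ) • u (t (n-1)) + μ • u (t (n-2))
      = (u (t n) - u (t (n-1)) - (t n - t (n-1)) • u' (t (n-1)))
        + μ • (u (t (n-2)) - u (t (n-1)) - (t (n-2) - t (n-1)) • u' (t (n-1))) := by
    rw [← hμmul]; module
  have hnorm : ‖u (t n) - (1 + μ) • u (t (n-1)) + μ • u (t (n-2))‖
      ≤ M * (t (n-1)) ^ (α-2) * (t n - t (n-1)) ^ 2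
        + μ * (M * (t (n-2)) ^ (α-2) * (t (n-1) - t (n-2)) ^ 2) := by
    rw [hdecomp]
    refine (norm_add_le _ _).trans ?_
    rw [norm_smul, Real.norm_eq_abs, abs_of_pos hμpos]
    exact add_le_add hR1 (mul_le_mul_of_nonneg_left hR2 hμpos.le)
  -- collect to first bound
  have hμΔ : μ * (t (n-1) - t (n-2)) ^ 2 ≤ (t n - t (n-1)) ^ 2 := by
    have he : μ * (t (n-1) - t (n-2)) ^ 2 = (t n - t (n-1)) * (t (n-1) - t (n-2)) := by
      rw [sq, ← mul_assoc, hμmul]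
    rw [he, sq]
    exact mul_le_mul_of_nonneg_left hstep hΔ.le
  have hba : (t (n-1)) ^ (α-2) ≤ (t (n-2)) ^ (α-2) :=
    Real.rpow_le_rpow_of_nonpos hta_pos hab.le hα2
  have hkey3 : (t (n-2)) ^ (α-2) ≤ (3:ℝ) ^ (2*γ) * (t n) ^ (α-2) := by
    have hmul : (3:ℝ) ^ (-γ) * ((n:ℝ)) ^ γ = ((n:ℝ)/3) ^ γ := by
      rw [Real.div_rpow (by linarith) (by norm_num), Real.rpow_neg (by norm_num)]
      ring
    have hle : ((n:ℝ)/3) ^ γ ≤ ((n:ℝ)-2) ^ γ :=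
      Real.rpow_le_rpow (by linarith) (by linarith) hγ0.le
    have h1 : (3:ℝ) ^ (-γ) * t n ≤ t (n-2) := by
      rw [htc, hta, ← mul_assoc, hmul]
      exact mul_le_mul_of_nonneg_right hle hD.le
    have h1pos : 0 < (3:ℝ) ^ (-γ) * t n :=
      mul_pos (Real.rpow_pos_of_pos (by norm_num) _) htc_pos
    have h2 : (t (n-2)) ^ (α-2) ≤ ((3:ℝ) ^ (-γ) * t n) ^ (α-2) :=
      Real.rpow_le_rpow_of_nonpos h1pos h1 hα2
    refine h2.trans ?_
    rw [Real.mul_rpow (Real.rpow_nonneg (by norm_num) _) htc_pos.le,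
        ← Real.rpow_mul (by norm_num : (0:ℝ) ≤ 3)]
    refine mul_le_mul_of_nonneg_right ?_ (Real.rpow_nonneg htc_pos.le _)
    refine Real.rpow_le_rpow_of_exponent_le (by norm_num) ?_
    have hexp : -γ * (α - 2) = γ * (2 - α) := by ring
    have hle2 : γ * (2 - α) ≤ γ * 2 := mul_le_mul_of_nonneg_left (by linarith) hγ0.le
    linarith
  have htn_nonneg : (0:ℝ) ≤ (t n) ^ (α-2) := Real.rpow_nonneg htc_pos.le _
  have part1 : ‖u (t n) - (1 + μ) • u (t (n-1)) + μ • u (t (n-2))‖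
      ≤ 5 * M * (3:ℝ) ^ (2*γ) * (t n - t (n-1)) ^ 2 * (t n) ^ (α-2) := by
    have t1 : M * (t (n-1)) ^ (α-2) * (t n - t (n-1)) ^ 2
        ≤ M * (t (n-2)) ^ (α-2) * (t n - t (n-1)) ^ 2 :=
      mul_le_mul_of_nonneg_right (mul_le_mul_of_nonneg_left hba hM.le) (sq_nonneg _)
    have t2 : μ * (M * (t (n-2)) ^ (α-2) * (t (n-1) - t (n-2)) ^ 2)
        ≤ M * (t (n-2)) ^ (α-2) * (t n - t (n-1)) ^ 2 := by
      have h := mul_le_mul_of_nonneg_left hμΔ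
        (mul_nonneg hM.le (Real.rpow_nonneg hta_pos.le (α-2)))
      calc μ * (M * (t (n-2)) ^ (α-2) * (t (n-1) - t (n-2)) ^ 2)
          = (M * (t (n-2)) ^ (α-2)) * (μ * (t (n-1) - t (n-2)) ^ 2) := by ring
        _ ≤ (M * (t (n-2)) ^ (α-2)) * (t n - t (n-1)) ^ 2 := h
        _ = M * (t (n-2)) ^ (α-2) * (t n - t (n-1)) ^ 2 := by ring
    have t3 : 2 * M * (t (n-2)) ^ (α-2) * (t n - t (n-1)) ^ 2
        ≤ 5 * M * (3:ℝ) ^ (2*γ) * (t n - t (n-1)) ^ 2 * (t n) ^ (α-2) := by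
      have c1 : (2 * M * (t n - t (n-1)) ^ 2) * (t (n-2)) ^ (α-2)
          ≤ (2 * M * (t n - t (n-1)) ^ 2) * ((3:ℝ) ^ (2*γ) * (t n) ^ (α-2)) :=
        mul_le_mul_of_nonneg_left hkey3 (by positivity)
      have c2 : (0:ℝ) ≤ M * (3:ℝ) ^ (2*γ) * (t n - t (n-1)) ^ 2 * (t n) ^ (α-2) := by
        have : (0:ℝ) ≤ (3:ℝ) ^ (2*γ) := Real.rpow_nonneg (by norm_num) _
        positivity
      linarith [c1, c2]
    calc ‖u (t n) - (1 + μ) • u (t (n-1)) + μ • u (t (n-2))‖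
        ≤ M * (t (n-1)) ^ (α-2) * (t n - t (n-1)) ^ 2
          + μ * (M * (t (n-2)) ^ (α-2) * (t (n-1) - t (n-2)) ^ 2) := hnorm
      _ ≤ 2 * M * (t (n-2)) ^ (α-2) * (t n - t (n-1)) ^ 2 := by linarith
      _ ≤ 5 * M * (3:ℝ) ^ (2*γ) * (t n - t (n-1)) ^ 2 * (t n) ^ (α-2) := t3
  refine ⟨part1, ?_⟩
  -- second inequality
  have hΔle : t n - t (n-1) ≤ γ * ((n:ℝ)) ^ (γ-1) * D := by
    have h := rpow_diff_le γ hγ (n:ℝ) (by linarith)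
    rw [htc, htb]
    calc ((n:ℝ)) ^ γ * D - ((n:ℝ)-1) ^ γ * D = (((n:ℝ)) ^ γ - ((n:ℝ)-1) ^ γ) * D := by ring
      _ ≤ (γ * ((n:ℝ)) ^ (γ-1)) * D := mul_le_mul_of_nonneg_right h hD.le
      _ = γ * ((n:ℝ)) ^ (γ-1) * D := by ring
  have hsq : (t n - t (n-1)) ^ 2 ≤ (γ * ((n:ℝ)) ^ (γ-1) * D) ^ 2 :=
    pow_le_pow_left₀ hΔ.le hΔle 2
  have key : (t n - t (n-1)) ^ 2 * (t n) ^ (α-2)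
      ≤ γ ^ 2 * T ^ α * ((N:ℝ)) ^ (-(min (γ*α) 2)) := by
    calc (t n - t (n-1)) ^ 2 * (t n) ^ (α-2)
        ≤ (γ * ((n:ℝ)) ^ (γ-1) * D) ^ 2 * (t n) ^ (α-2) :=
          mul_le_mul_of_nonneg_right hsq htn_nonneg
      _ = (γ * ((n:ℝ)) ^ (γ-1) * (T / (N:ℝ) ^ γ)) ^ 2
            * ((((n:ℝ)) ^ γ) * (T / (N:ℝ) ^ γ)) ^ (α-2) := by rw [htc, hDdef]
      _ = γ ^ 2 * T ^ α * (((n:ℝ)) ^ (γ*α-2) * ((N:ℝ)) ^ (-(γ*α))) :=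
          rpow_alg γ α T (n:ℝ) (N:ℝ) hγ0 (by linarith) hN0 hT
      _ ≤ γ ^ 2 * T ^ α * (((N:ℝ)) ^ (-(min (γ*α) 2))) := by
          refine mul_le_mul_of_nonneg_left ?_ (by positivity)
          rcases le_total (γ*α) 2 with h | h
          · rw [min_eq_left h]
            have h1 : ((n:ℝ)) ^ (γ*α-2) ≤ 1 :=
              Real.rpow_le_one_of_one_le_of_nonpos (by linarith) (by linarith)
            have h2 : (0:ℝ) < ((N:ℝ)) ^ (-(γ*α)) := Real.rpow_pos_of_pos hN0 _
            exact mul_le_of_le_one_left h2.le h1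
          · rw [min_eq_right h]
            have h1 : ((n:ℝ)) ^ (γ*α-2) ≤ ((N:ℝ)) ^ (γ*α-2) :=
              Real.rpow_le_rpow (by linarith) hmN (by linarith)
            calc ((n:ℝ)) ^ (γ*α-2) * ((N:ℝ)) ^ (-(γ*α))
                ≤ ((N:ℝ)) ^ (γ*α-2) * ((N:ℝ)) ^ (-(γ*α)) :=
                  mul_le_mul_of_nonneg_right h1 (Real.rpow_pos_of_pos hN0 _).le
              _ = ((N:ℝ)) ^ (-(2:ℝ)) := by
                  rw [← Real.rpow_add hN0]; congr 1; ring
  have hfac : (0:ℝ) ≤ 5 * M * (3:ℝ) ^ (2*γ) := by positivity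
  calc 5 * M * (3:ℝ) ^ (2*γ) * (t n - t (n-1)) ^ 2 * (t n) ^ (α-2)
      = (5 * M * (3:ℝ) ^ (2*γ)) * ((t n - t (n-1)) ^ 2 * (t n) ^ (α-2)) := by ring
    _ ≤ (5 * M * (3:ℝ) ^ (2*γ)) * (γ ^ 2 * T ^ α * ((N:ℝ)) ^ (-(min (γ*α) 2))) :=
        mul_le_mul_of_nonneg_left key hfac
    _ = 5 * M * (3:ℝ) ^ (2*γ) * γ ^ 2 * T ^ α * ((N:ℝ)) ^ (-(min (γ*α) 2)) := by ring
end

section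
/- Caputo-derivative product identity (used in the proof of Theorem 2.1): let α ∈ (0,1), T > 0, X a real Banach space, and f : [0,T] → X continuously differentiable. Then for every t ∈ (0,T], t·∫_0^t k_{1−α}(t−s) f'(s) ds = ∫_0^t k_{1−α}(t−s) (d/ds)(s f(s)) ds − α·∫_0^t k_{1−α}(t−s) f(s) ds − t·k_{1−α}(t)·f(0); equivalently, writing ∂_t^α g(t) = ∫_0^t k_{1−α}(t−s) g'(s) ds for the Caputo derivative, t·∂_t^α f(t) = ∂_t^α (t f)(t) − α∫_0^t k_{1−α}(t−s) f(s) ds − t k_{1−α}(t) f(0). -/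
/-!
Since `s = τ - (τ - s)`, the kernel integral of `s f'(s)` is `τ ∫ (τ-s)^(-α) f'` minus
`∫ (τ-s)^(1-α) f'`. Integrating the latter by parts against
`d/ds (τ-s)^(1-α) = -(1-α)(τ-s)^(-α)`, a primitive that vanishes at `s = τ`, gives
`(1-α) ∫ (τ-s)^(-α) f - τ^(1-α) f(0)`; divided by `Γ(1-α)`, this is exactly the
`(1-α) ∫ k f - τ k(τ) f(0)` left over on the right-hand side.
-/

open MeasureTheory intervalIntegral Set

section RiemannLiouvilleKernel

variable {X : Type*} [NormedAddCommGroup X] [NormedSpace ℝ X] {a b : ℝ}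

theorem intervalIntegrable_sub_rpow {r : ℝ} (hr : -1 < r) :
    IntervalIntegrable (fun s : ℝ => (b - s) ^ r) volume a b := by
  simpa using ((intervalIntegrable_rpow' (a := b - b) (b := b - a) hr).comp_sub_left b).symm

theorem intervalIntegrable_sub_rpow_smul {r : ℝ} (hr : -1 < r) {g : ℝ → X}
    (hg : ContinuousOn g (uIcc a b)) :
    IntervalIntegrable (fun s => (b - s) ^ r • g s) volume a b :=
  (intervalIntegrable_sub_rpow hr).smul_continuousOn hg

theorem integral_sub_rpow_neg_smul_smul {α : ℝ} (hα : α < 1) {g : ℝ → X}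
    (hg : ContinuousOn g (uIcc a b)) :
    ∫ s in a..b, (b - s) ^ (-α) • (s • g s)
      = b • (∫ s in a..b, (b - s) ^ (-α) • g s) - ∫ s in a..b, (b - s) ^ (1 - α) • g s := by
  have hpointwise : ∀ s ≠ b,
      (b - s) ^ (-α) • (s • g s) = b • ((b - s) ^ (-α) • g s) - (b - s) ^ (1 - α) • g s := by
    intro s hs
    rw [show 1 - α = -α + 1 by ring, Real.rpow_add_one (sub_ne_zero.2 hs.symm), smul_smul,
      smul_smul, ← sub_smul]
    congr 1
    ring
  rw [integral_congr_ae ((volume.ae_ne b).mono fun s hs _ => hpointwise s hs),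
    intervalIntegral.integral_sub, intervalIntegral.integral_smul]
  · exact (intervalIntegrable_sub_rpow_smul (by linarith) hg).smul b
  · exact intervalIntegrable_sub_rpow_smul (by linarith) hg

variable [CompleteSpace X]

theorem integral_sub_rpow_one_sub_smul_deriv {α : ℝ} (hα : α < 1) {f f' : ℝ → X}
    (hf : ContinuousOn f (uIcc a b))
    (hderiv : ∀ s ∈ Ioo (min a b) (max a b), HasDerivAt f (f' s) s)
    (hf' : IntervalIntegrable f' volume a b) :
    ∫ s in a..b, (b - s) ^ (1 - α) • f' s
      = (1 - α) • (∫ s in a..b, (b - s) ^ (-α) • f s) - (b - a) ^ (1 - α) • f a := by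
  have hu : ContinuousOn (fun s : ℝ => (b - s) ^ (1 - α)) (uIcc a b) :=
    ((continuous_const.sub continuous_id).rpow_const fun _ => Or.inr (by linarith)).continuousOn
  have huu' : ∀ s ∈ Ioo (min a b) (max a b),
      HasDerivAt (fun s : ℝ => (b - s) ^ (1 - α)) (-(1 - α) * (b - s) ^ (-α)) s := by
    intro s hs
    have hsb : b - s ≠ 0 := sub_ne_zero.2 (by rintro rfl; grind)
    have := ((hasDerivAt_id' s).const_sub b).rpow_const (p := 1 - α) (Or.inl hsb)
    rwa [sub_sub_cancel_left, neg_one_mul] at this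
  have hu' : IntervalIntegrable (fun s : ℝ => -(1 - α) * (b - s) ^ (-α)) volume a b :=
    (intervalIntegrable_sub_rpow (by linarith)).const_mul _
  rw [integral_smul_deriv_eq_deriv_smul_of_hasDerivAt hu hf huu' hderiv hu' hf', sub_self,
    Real.zero_rpow (by linarith), zero_smul, zero_sub]
  simp_rw [mul_smul, neg_smul]
  rw [intervalIntegral.integral_neg, intervalIntegral.integral_smul]
  abel

end RiemannLiouvilleKernel

theorem caputo_product_identity_general
    (α T : ℝ) {X : Type*} [NormedAddCommGroup X] [NormedSpace ℝ X] [CompleteSpace X]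
    (f f' : ℝ → X)
    (hα1 : α < 1)
    (hf : ∀ s ∈ Set.Icc (0 : ℝ) T, HasDerivWithinAt f (f' s) (Set.Icc (0 : ℝ) T) s)
    (hf' : ContinuousOn f' (Set.Icc (0 : ℝ) T)) :
    ∀ τ ∈ Set.Ioc (0 : ℝ) T,
      τ • ∫ s in (0 : ℝ)..τ, ((τ - s) ^ (-α) / Real.Gamma (1 - α)) • f' s
        = (∫ s in (0 : ℝ)..τ, ((τ - s) ^ (-α) / Real.Gamma (1 - α)) • (f s + s • f' s))
          - α • (∫ s in (0 : ℝ)..τ, ((τ - s) ^ (-α) / Real.Gamma (1 - α)) • f s)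
          - (τ * (τ ^ (-α) / Real.Gamma (1 - α))) • f 0 := by
  rintro τ ⟨hτ, hτT⟩
  have hsub : uIcc 0 τ ⊆ Icc 0 T := by
    rw [uIcc_of_le hτ.le]
    exact Icc_subset_Icc_right hτT
  have hfc : ContinuousOn f (uIcc 0 τ) :=
    fun s hs => (hf s (hsub hs)).continuousWithinAt.mono hsub
  have hf'c : ContinuousOn f' (uIcc 0 τ) := hf'.mono hsub
  have hderiv : ∀ s ∈ Ioo (min 0 τ) (max 0 τ), HasDerivAt f (f' s) s := by
    rw [min_eq_left hτ.le, max_eq_right hτ.le]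
    exact fun s hs => (hf s ⟨hs.1.le, hs.2.le.trans hτT⟩).hasDerivAt
      (Icc_mem_nhds hs.1 (hs.2.trans_le hτT))
  have hparts := integral_sub_rpow_one_sub_smul_deriv hα1 hfc hderiv hf'c.intervalIntegrable
  have hmoment := integral_sub_rpow_neg_smul_smul hα1 hf'c
  have hτpow : τ * τ ^ (-α) = τ ^ (1 - α) := by
    rw [sub_eq_neg_add, Real.rpow_add_one hτ.ne', mul_comm]
  simp only [div_eq_inv_mul, mul_smul, intervalIntegral.integral_smul, smul_add (_ ^ _)]
  rw [intervalIntegral.integral_add, hmoment]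
  · rw [hparts, sub_zero, ← hτpow, mul_smul]
    module
  · exact intervalIntegrable_sub_rpow_smul (by linarith) hfc
  · exact intervalIntegrable_sub_rpow_smul (by linarith) (continuousOn_id.smul hf'c)

/-- Caputo-derivative product identity (used in the proof of Theorem 2.1):
for `f : [0,T] → X` continuously differentiable and `t ∈ (0,T]`, writing
`k_{1-α}(s) = s^{-α}/Γ(1-α)`,
`t ∫₀ᵗ k_{1-α}(t-s) f'(s) ds = ∫₀ᵗ k_{1-α}(t-s) (d/ds)(s f(s)) ds
  - α ∫₀ᵗ k_{1-α}(t-s) f(s) ds - t k_{1-α}(t) f(0)`. -/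
theorem caputo_product_identity
    (α T : ℝ) {X : Type*} [NormedAddCommGroup X] [NormedSpace ℝ X] [CompleteSpace X]
    (f f' : ℝ → X)
    (hα0 : 0 < α) (hα1 : α < 1) (hT : 0 < T)
    (hf : ∀ s ∈ Set.Icc (0 : ℝ) T, HasDerivWithinAt f (f' s) (Set.Icc (0 : ℝ) T) s)
    (hf' : ContinuousOn f' (Set.Icc (0 : ℝ) T)) :
    ∀ τ ∈ Set.Ioc (0 : ℝ) T,
      τ • ∫ s in (0 : ℝ)..τ, ((τ - s) ^ (-α) / Real.Gamma (1 - α)) • f' s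
        = (∫ s in (0 : ℝ)..τ, ((τ - s) ^ (-α) / Real.Gamma (1 - α)) • (f s + s • f' s))
          - α • (∫ s in (0 : ℝ)..τ, ((τ - s) ^ (-α) / Real.Gamma (1 - α)) • f s)
          - (τ * (τ ^ (-α) / Real.Gamma (1 - α))) • f 0 :=
  caputo_product_identity_general α T f f' hα1 hf hf'
end
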